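/- arXiv:math/0611574 — 5 statements merged into one kernel-verified Lean document; each statement's English description precedes it below -/
import Mathlib

section
/- On SO(n), the coordinate functions x_{ij} satisfy κ(x_{ij}, x_{kl}) = -(1/2)(x_{il}x_{kj} - δ_{jl} Σ_{t=1}^n x_{it}x_{kt}), where κ(x_{ij}, x_{kl})(x) = Σ_{r<s} (e_i·x·Y_{rs}·e_jᵀ)(e_k·x·Y_{rs}·e_lᵀ). -/
/-! Entrywise, `x * (E_rs - E_sr)` at `(a, b)` is the `(r, s)` coefficient of the wedge of the
row `x a` with `e_b`. The summand of `κ` is therefore symmetric in `(r, s)` and vanishes on the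
diagonal, so the sum over `r < s` is half the full double sum, and the full double sum of products
of two wedges is given by the Binet–Cauchy identity
`∑ r s, (u ∧ u')_rs (v ∧ v')_rs = 2 (⟨u, v⟩⟨u', v'⟩ - ⟨u, v'⟩⟨u', v⟩)`. -/

open Matrix

theorem sum_sum_eq_two_nsmul_sum_sum_ite_lt {ι M : Type*} [Fintype ι] [LinearOrder ι]
    [AddCommMonoid M] (f : ι → ι → M) (hsymm : ∀ r s, f r s = f s r) (hdiag : ∀ r, f r r = 0) :
    ∑ r, ∑ s, f r s = 2 • ∑ r, ∑ s, (if r < s then f r s else 0) := by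
  have hsplit : ∀ r s, f r s = (if r < s then f r s else 0) + (if s < r then f s r else 0) := by
    intro r s
    rcases lt_trichotomy r s with h | rfl | h
    · simp [h, h.asymm]
    · simp [hdiag]
    · simp [h, h.asymm, hsymm r s]
  calc ∑ r, ∑ s, f r s
      = ∑ r, ∑ s, ((if r < s then f r s else 0) + (if s < r then f s r else 0)) :=
        Finset.sum_congr rfl fun r _ => Finset.sum_congr rfl fun s _ => hsplit r s
    _ = ∑ r, ∑ s, (if r < s then f r s else 0) + ∑ r, ∑ s, (if s < r then f s r else 0) := by
        simp only [Finset.sum_add_distrib]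
    _ = 2 • ∑ r, ∑ s, (if r < s then f r s else 0) := by
        rw [Finset.sum_comm (f := fun r s => if s < r then f s r else 0), two_nsmul]

namespace Matrix

variable {m n R : Type*} [CommRing R]

def wedge (u v : n → R) : Matrix n n R := vecMulVec u v - vecMulVec v u

theorem wedge_apply (u v : n → R) (r s : n) : wedge u v r s = u r * v s - v r * u s := rfl

theorem wedge_apply_swap (u v : n → R) (r s : n) : wedge u v s r = -wedge u v r s := by
  simp only [wedge_apply]; ring

theorem wedge_apply_self (u v : n → R) (r : n) : wedge u v r r = 0 := by
  simp only [wedge_apply]; ring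

variable [Fintype n]

theorem sum_sum_wedge_apply_mul_wedge_apply (u u' v v' : n → R) :
    ∑ r, ∑ s, wedge u u' r s * wedge v v' r s =
      2 * ((u ⬝ᵥ v) * (u' ⬝ᵥ v') - (u ⬝ᵥ v') * (u' ⬝ᵥ v)) := by
  have hexpand : ∀ r s, wedge u u' r s * wedge v v' r s =
      u r * v r * (u' s * v' s) - u r * v' r * (u' s * v s)
        - u' r * v r * (u s * v' s) + u' r * v' r * (u s * v s) := by
    intro r s; simp only [wedge_apply]; ring
  simp only [hexpand, Finset.sum_add_distrib, Finset.sum_sub_distrib, ← Finset.sum_mul_sum,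
    dotProduct]
  ring

variable [DecidableEq n]

theorem mul_single_sub_single_apply (x : Matrix m n R) (r s : n) (c : R) (a : m) (b : n) :
    (x * (single r s c - single s r c)) a b = wedge (x a) (Pi.single b c) r s := by
  simp [wedge_apply, mul_sub, mul_apply, single, Pi.single_apply, ite_and, mul_comm]

end Matrix

theorem stmt10_general (n : ℕ) (x : Matrix (Fin n) (Fin n) ℝ)
    (Y : Fin n → Fin n → Matrix (Fin n) (Fin n) ℝ)
    (hY : ∀ r s, Y r s =
      (Real.sqrt 2)⁻¹ • (Matrix.single r s (1 : ℝ) - Matrix.single s r 1))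
    (i j k l : Fin n) :
    (∑ r : Fin n, ∑ s : Fin n, if r < s then (x * Y r s) i j * (x * Y r s) k l else 0) =
      -(1/2 : ℝ) * (x i l * x k j -
        (if j = l then (1 : ℝ) else 0) * ∑ t : Fin n, x i t * x k t) := by
  set c : ℝ := (Real.sqrt 2)⁻¹
  have hc : c * c = 1 / 2 := by
    rw [← mul_inv, Real.mul_self_sqrt zero_le_two, one_div]
  have hentry : ∀ r s a b, (x * Y r s) a b = wedge (x a) (Pi.single b c) r s := by
    intro r s a b
    rw [hY, smul_sub, smul_single, smul_single, smul_eq_mul, mul_one,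
      mul_single_sub_single_apply]
  simp_rw [hentry]
  have hsum := sum_sum_eq_two_nsmul_sum_sum_ite_lt
    (fun r s => wedge (x i) (Pi.single j c) r s * wedge (x k) (Pi.single l c) r s)
    (fun r s => by simp only [wedge_apply_swap _ _ r s, neg_mul_neg])
    (fun r => by simp only [wedge_apply_self, zero_mul])
  rw [sum_sum_wedge_apply_mul_wedge_apply, two_nsmul, ← two_mul] at hsum
  simp only [single_dotProduct, dotProduct_single, Pi.single_apply] at hsum
  rw [← mul_right_inj' (two_ne_zero' ℝ), ← hsum, dotProduct]
  by_cases hjl : j = l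
  · subst hjl
    simp only [if_true]
    linear_combination (2 * ∑ t, x i t * x k t - 2 * x i j * x k j) * hc
  · simp only [hjl, Ne.symm hjl, if_false]
    linear_combination -2 * x i l * x k j * hc

theorem stmt10 (n : ℕ) (x : Matrix (Fin n) (Fin n) ℝ)
    (hx : x * xᵀ = 1) (hdet : x.det = 1)
    (Y : Fin n → Fin n → Matrix (Fin n) (Fin n) ℝ)
    (hY : ∀ r s, Y r s =
      (Real.sqrt 2)⁻¹ • (Matrix.single r s (1 : ℝ) - Matrix.single s r 1))
    (i j k l : Fin n) :
    (∑ r : Fin n, ∑ s : Fin n, if r < s then (x * Y r s) i j * (x * Y r s) k l else 0) =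
      -(1/2 : ℝ) * (x i l * x k j -
        (if j = l then (1 : ℝ) else 0) * ∑ t : Fin n, x i t * x k t) :=
  stmt10_general n x Y hY i j k l
end

section
/- For x ∈ SO(n) (so x·xᵀ = I), the κ-operator on coordinate functions simplifies to κ(x_{ij}, x_{kl}) = (1/2)(δ_{ik}δ_{jl} - x_{il}x_{kj}). -/
/-!
The summand is symmetric in `(r, s)` and vanishes for `r = s`, because `Y s r = -Y r s`; hence the
sum over `r < s` is half the sum over all pairs. Writing `A r s = E r s - E s r`, the entry
`(x * A r s) a b = x a r δ s b - x a s δ r b` is antisymmetric in `(r, s)`, and expanding the full sum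
gives `2 (δ j l (x xᵀ) i k - x i l x k j)`. Now `x xᵀ = 1` and `(1/√2)² = 1/2` give the claim.
-/

open Matrix Finset

theorem two_nsmul_sum_sum_ite_lt {ι M : Type*} [Fintype ι] [LinearOrder ι] [AddCommMonoid M]
    (f : ι → ι → M) (hsymm : ∀ r s, f s r = f r s) (hdiag : ∀ r, f r r = 0) :
    2 • ∑ r, ∑ s, (if r < s then f r s else 0) = ∑ r, ∑ s, f r s := by
  have hsplit : ∀ r s, (if r < s then f r s else 0) + (if s < r then f s r else 0) = f r s := by
    intro r s
    rcases lt_trichotomy r s with h | rfl | h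
    · simp [h, h.not_gt]
    · simp [hdiag]
    · simp [h, h.not_gt, hsymm]
  calc 2 • ∑ r, ∑ s, (if r < s then f r s else 0)
      = ∑ r, ∑ s, (if r < s then f r s else 0) + ∑ r, ∑ s, (if s < r then f s r else 0) := by
        rw [two_nsmul, sum_comm (f := fun r s => if s < r then f s r else 0)]
    _ = ∑ r, ∑ s, f r s := by simp only [← sum_add_distrib, hsplit]

theorem Matrix.mul_single_apply {l m n α : Type*} [Fintype m] [DecidableEq m] [DecidableEq n]
    [NonUnitalNonAssocSemiring α] (M : Matrix l m α) (i : m) (j : n) (c : α) (a : l) (b : n) :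
    (M * single i j c) a b = if j = b then M a i * c else 0 := by
  split_ifs with h
  · rw [h, mul_single_apply_same]
  · exact mul_single_apply_of_ne _ _ _ _ _ (Ne.symm h) _

theorem Matrix.mul_single_sub_single_apply_s11 {l m α : Type*} [Fintype m] [DecidableEq m] [Ring α]
    (M : Matrix l m α) (r s : m) (a : l) (b : m) :
    (M * (single r s (1 : α) - single s r 1) : Matrix l m α) a b =
      (if s = b then M a r else 0) - (if r = b then M a s else 0) := by
  simp only [Matrix.mul_sub, sub_apply, mul_single_apply, mul_one]

theorem sum_sum_sub_swap_mul_sub_swap {ι R : Type*} [Fintype ι] [CommRing R] (f g : ι → ι → R) :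
    ∑ r, ∑ s, (f r s - f s r) * (g r s - g s r) =
      2 * (∑ r, ∑ s, f r s * g r s - ∑ r, ∑ s, f r s * g s r) := by
  simp only [sub_mul, mul_sub, sum_sub_distrib]
  rw [sum_comm (f := fun r s => f s r * g s r), sum_comm (f := fun r s => f s r * g r s)]
  ring

theorem Matrix.sum_sum_mul_single_sub_single_apply_mul {n R : Type*} [Fintype n] [DecidableEq n]
    [CommRing R] (x : Matrix n n R) (i j k l : n) :
    ∑ r, ∑ s, (x * (single r s (1 : R) - single s r 1) : Matrix n n R) i j *
      (x * (single r s (1 : R) - single s r 1) : Matrix n n R) k l =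
      2 * ((x * xᵀ) i k * (1 : Matrix n n R) j l - x i l * x k j) := by
  simp only [mul_single_sub_single_apply_s11]
  rw [sum_sum_sub_swap_mul_sub_swap (fun r s => if s = j then x i r else 0)
    (fun r s => if s = l then x k r else 0)]
  simp [ite_mul, mul_ite, sum_ite_eq', mul_apply, one_apply, eq_comm (a := l)]

theorem stmt11 (n : ℕ) (x : Matrix (Fin n) (Fin n) ℝ)
    (hx : x * xᵀ = 1)
    (Y : Fin n → Fin n → Matrix (Fin n) (Fin n) ℝ)
    (hY : ∀ r s, Y r s =
      (Real.sqrt 2)⁻¹ • (Matrix.single r s (1 : ℝ) - Matrix.single s r 1))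
    (i j k l : Fin n) :
    (∑ r : Fin n, ∑ s : Fin n, if r < s then (x * Y r s) i j * (x * Y r s) k l else 0) =
      (1/2 : ℝ) * ((if i = k then (1 : ℝ) else 0) * (if j = l then (1 : ℝ) else 0)
        - x i l * x k j) := by
  have hanti : ∀ r s, Y s r = -Y r s := fun r s => by rw [hY, hY, ← smul_neg, neg_sub]
  have hdiag : ∀ r, Y r r = 0 := fun r => by rw [hY, sub_self, smul_zero]
  have hhalf := two_nsmul_sum_sum_ite_lt (fun r s => (x * Y r s) i j * (x * Y r s) k l)
    (fun r s => by simp only [hanti r s, Matrix.mul_neg, Matrix.neg_apply, neg_mul_neg])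
    (fun r => by simp only [hdiag, Matrix.zero_apply, mul_zero])
  have hsqrt : (Real.sqrt 2)⁻¹ * (Real.sqrt 2)⁻¹ = 2⁻¹ := by
    rw [← mul_inv, Real.mul_self_sqrt zero_le_two]
  have hfull : ∑ r, ∑ s, (x * Y r s) i j * (x * Y r s) k l =
      (if i = k then (1 : ℝ) else 0) * (if j = l then (1 : ℝ) else 0) - x i l * x k j := by
    simp only [hY, Matrix.mul_smul, Matrix.smul_apply, smul_eq_mul,
      mul_mul_mul_comm _ _ (_ : ℝ)⁻¹, hsqrt]
    simp only [← mul_sum, sum_sum_mul_single_sub_single_apply_mul, hx, one_apply]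
    ring
  rw [hfull, two_nsmul] at hhalf
  linarith
end

section
/- Let p, a, b, c, d ∈ ℂⁿ with (a,d) = (b,c), where (u,v) = Σ_t u_t v_t. Define, for complex n×n matrices z and w, P = trace(pᵀa·zᵀ + pᵀb·wᵀ) and Q = trace(pᵀc·zᵀ + pᵀd·wᵀ). Then with the bilinear operator κ determined on coordinates by κ(z_{ij},z_{kl}) = -(1/2)z_{il}z_{kj}, κ(w_{ij},w_{kl}) = -(1/2)w_{il}w_{kj}, and κ(z_{ij},w_{kl}) = -(1/2)[w_{il}z_{kj} - δ_{jl}Σ_t(z_{it}w_{kt} - w_{it}z_{kt})], one has PQ + 2κ(P,Q) = [(a,d) - (b,c)]·Σ_{i,k,t}(z_{it}w_{kt} - w_{it}z_{kt}) = 0. -/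
open Matrix

private lemma four_sum_factor' (n : ℕ) (f g : Fin n → Fin n → ℂ) :
    (∑ i : Fin n, ∑ j : Fin n, ∑ k : Fin n, ∑ l : Fin n, f i l * g j k)
      = (∑ i : Fin n, ∑ l : Fin n, f i l) * (∑ j : Fin n, ∑ k : Fin n, g j k) := by
  simp only [← Finset.sum_mul, ← Finset.mul_sum]

private lemma antisym_zero' (n : ℕ) (f : Fin n → Fin n → ℂ) (hf : ∀ i k, f i k = - f k i) :
    (∑ i : Fin n, ∑ k : Fin n, f i k) = 0 := by
  have h1 : (∑ i : Fin n, ∑ k : Fin n, f i k) = - ∑ i : Fin n, ∑ k : Fin n, f i k := by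
    calc (∑ i : Fin n, ∑ k : Fin n, f i k) = ∑ i : Fin n, ∑ k : Fin n, -f k i :=
          Finset.sum_congr rfl fun i _ => Finset.sum_congr rfl fun k _ => hf i k
      _ = - ∑ i : Fin n, ∑ k : Fin n, f k i := by simp
      _ = - ∑ k : Fin n, ∑ i : Fin n, f k i := by rw [Finset.sum_comm]
  linear_combination (1/2 : ℂ) * h1

private lemma trace_help (n : ℕ) (p a b : Fin n → ℂ) (z w : Matrix (Fin n) (Fin n) ℂ) :
    Matrix.trace ((Matrix.of fun i j => p i * a j) * zᵀ +
      (Matrix.of fun i j => p i * b j) * wᵀ)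
    = (∑ j : Fin n, ∑ k : Fin n, a j * (p k * z k j))
      + (∑ j : Fin n, ∑ k : Fin n, b j * (p k * w k j)) := by
  simp only [Matrix.trace, Matrix.diag_apply, Matrix.add_apply, Matrix.mul_apply,
    Matrix.transpose_apply, Matrix.of_apply, Finset.sum_add_distrib]
  congr 1 <;>
  · rw [Finset.sum_comm]
    exact Finset.sum_congr rfl fun j _ => Finset.sum_congr rfl fun k _ => by ring

theorem stmt14 (n : ℕ) (p a b c d : Fin n → ℂ)
    (h : ∑ t, a t * d t = ∑ t, b t * c t)
    (z w : Matrix (Fin n) (Fin n) ℂ)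
    (P Q kPQ : ℂ)
    (hP : P = Matrix.trace ((Matrix.of fun i j => p i * a j) * zᵀ +
      (Matrix.of fun i j => p i * b j) * wᵀ))
    (hQ : Q = Matrix.trace ((Matrix.of fun i j => p i * c j) * zᵀ +
      (Matrix.of fun i j => p i * d j) * wᵀ))
    (hk : kPQ = ∑ i : Fin n, ∑ j : Fin n, ∑ k : Fin n, ∑ l : Fin n,
      ((p i * a j) * (p k * c l) * (-(1/2 : ℂ) * (z i l * z k j))
      + (p i * b j) * (p k * d l) * (-(1/2 : ℂ) * (w i l * w k j))
      + (p i * a j) * (p k * d l) * (-(1/2 : ℂ) * (w i l * z k j -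
          (if j = l then (1 : ℂ) else 0) * ∑ t : Fin n, (z i t * w k t - w i t * z k t)))
      + (p i * b j) * (p k * c l) * (-(1/2 : ℂ) * (w k j * z i l -
          (if l = j then (1 : ℂ) else 0) * ∑ t : Fin n, (z k t * w i t - w k t * z i t))))) :
    P * Q + 2 * kPQ = ((∑ t, a t * d t) - ∑ t, b t * c t) *
        (∑ i : Fin n, ∑ k : Fin n, ∑ t : Fin n, (z i t * w k t - w i t * z k t))
      ∧ P * Q + 2 * kPQ = 0 := by
  let S : Fin n → Fin n → ℂ := fun i k => ∑ t : Fin n, (z i t * w k t - w i t * z k t)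
  have hSdef : ∀ i k : Fin n,
      (∑ t : Fin n, (z i t * w k t - w i t * z k t)) = S i k := fun _ _ => rfl
  set A := ∑ j : Fin n, ∑ k : Fin n, a j * (p k * z k j) with hA
  set B := ∑ j : Fin n, ∑ k : Fin n, b j * (p k * w k j) with hB
  set C := ∑ j : Fin n, ∑ k : Fin n, c j * (p k * z k j) with hC
  set D := ∑ j : Fin n, ∑ k : Fin n, d j * (p k * w k j) with hD
  have hP' : P = A + B := by rw [hP, trace_help]
  have hQ' : Q = C + D := by rw [hQ, trace_help]
  have hSanti : ∀ i k : Fin n, S i k = - S k i := by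
    intro i k
    show (∑ t : Fin n, (z i t * w k t - w i t * z k t))
        = -∑ t : Fin n, (z k t * w i t - w k t * z i t)
    rw [← Finset.sum_neg_distrib]
    exact Finset.sum_congr rfl fun t _ => by ring
  have hE : (∑ i : Fin n, ∑ k : Fin n, p i * p k * S i k) = 0 := by
    refine antisym_zero' n _ fun i k => ?_
    rw [hSanti i k]; ring
  have hE' : (∑ i : Fin n, ∑ k : Fin n, p i * p k * S k i) = 0 := by
    refine antisym_zero' n _ fun i k => ?_
    rw [hSanti k i]; ring
  have hk2 : kPQ = -(1/2 : ℂ) *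
        ((∑ i : Fin n, ∑ j : Fin n, ∑ k : Fin n, ∑ l : Fin n,
            (p i * c l * z i l) * (a j * (p k * z k j)))
        + (∑ i : Fin n, ∑ j : Fin n, ∑ k : Fin n, ∑ l : Fin n,
            (p i * d l * w i l) * (b j * (p k * w k j)))
        + (∑ i : Fin n, ∑ j : Fin n, ∑ k : Fin n, ∑ l : Fin n,
            (p i * d l * w i l) * (a j * (p k * z k j)))
        + (∑ i : Fin n, ∑ j : Fin n, ∑ k : Fin n, ∑ l : Fin n,
            (p i * c l * z i l) * (b j * (p k * w k j))))
      + (1/2 : ℂ) * (∑ i : Fin n, ∑ j : Fin n, ∑ k : Fin n, ∑ l : Fin n,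
          (if j = l then (1 : ℂ) else 0) * (a j * d l) * (p i * p k * S i k))
      + (1/2 : ℂ) * (∑ i : Fin n, ∑ j : Fin n, ∑ k : Fin n, ∑ l : Fin n,
          (if l = j then (1 : ℂ) else 0) * (b j * c l) * (p i * p k * S k i)) := by
    rw [hk]
    simp only [hSdef]
    simp only [Finset.mul_sum, ← Finset.sum_add_distrib, neg_mul, ← Finset.sum_neg_distrib]
    refine Finset.sum_congr rfl fun i _ => Finset.sum_congr rfl fun j _ =>
      Finset.sum_congr rfl fun k _ => Finset.sum_congr rfl fun l _ => ?_
    ring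
  have hD3 : (∑ i : Fin n, ∑ j : Fin n, ∑ k : Fin n, ∑ l : Fin n,
      (if j = l then (1 : ℂ) else 0) * (a j * d l) * (p i * p k * S i k)) = 0 := by
    simp only [ite_mul, one_mul, zero_mul, Finset.sum_ite_eq, Finset.mem_univ, if_true]
    rw [Finset.sum_comm]
    refine Finset.sum_eq_zero fun j _ => ?_
    simp only [← Finset.mul_sum, hE, mul_zero]
  have hD4 : (∑ i : Fin n, ∑ j : Fin n, ∑ k : Fin n, ∑ l : Fin n,
      (if l = j then (1 : ℂ) else 0) * (b j * c l) * (p i * p k * S k i)) = 0 := by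
    simp only [ite_mul, one_mul, zero_mul, Finset.sum_ite_eq', Finset.mem_univ, if_true]
    rw [Finset.sum_comm]
    refine Finset.sum_eq_zero fun j _ => ?_
    simp only [← Finset.mul_sum, hE', mul_zero]
  have hCalt : (∑ i : Fin n, ∑ l : Fin n, p i * c l * z i l) = C := by
    rw [hC, Finset.sum_comm]
    exact Finset.sum_congr rfl fun _ _ => Finset.sum_congr rfl fun _ _ => by ring
  have hDalt : (∑ i : Fin n, ∑ l : Fin n, p i * d l * w i l) = D := by
    rw [hD, Finset.sum_comm]
    exact Finset.sum_congr rfl fun _ _ => Finset.sum_congr rfl fun _ _ => by ring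
  have hk' : kPQ = -(1/2 : ℂ) * ((C + D) * (A + B)) := by
    rw [hk2, hD3, hD4]
    simp only [four_sum_factor', hCalt, hDalt]
    ring
  have hzero : P * Q + 2 * kPQ = 0 := by rw [hP', hQ', hk']; ring
  refine ⟨?_, hzero⟩
  rw [hzero, h, sub_self, zero_mul]
end

section
/- Let E = {φ₁, …, φₙ} be an eigenfamily on a semi-Riemannian manifold M with constants λ, μ (τ(φᵢ) = λφᵢ and κ(φᵢ,φⱼ) = μφᵢφⱼ for all i,j). Then for every k ≥ 1, the family Eᵏ of all k-fold products φ_{i₁}···φ_{i_k} is an eigenfamily with constants τ-eigenvalue kλ + k(k-1)μ and κ-constant k²μ. -/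
theorem stmt17 {A : Type*} [CommRing A] [Algebra ℂ A]
    (tau : A → A) (kappa : A → A → A)
    (hsymm : ∀ f g : A, kappa f g = kappa g f)
    (htau : ∀ f g : A, tau (f * g) = tau f * g + 2 * kappa f g + f * tau g)
    (hder : ∀ f g h : A, kappa (f * g) h = f * kappa g h + g * kappa f h)
    (E : Set A) (lam mu : ℂ)
    (hτ : ∀ φ ∈ E, tau φ = lam • φ)
    (hκ : ∀ φ ∈ E, ∀ ψ ∈ E, kappa φ ψ = mu • (φ * ψ)) :
    ∀ (k : ℕ), 1 ≤ k → ∀ φ ψ : Fin k → A,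
      (∀ i, φ i ∈ E) → (∀ i, ψ i ∈ E) →
      tau (∏ i, φ i) = ((k : ℂ) * lam + (k : ℂ) * ((k : ℂ) - 1) * mu) • ∏ i, φ i ∧
      kappa (∏ i, φ i) (∏ i, ψ i) = ((k : ℂ) ^ 2 * mu) • ((∏ i, φ i) * ∏ i, ψ i) := by
  have h1 : ∀ g : A, kappa 1 g = 0 := by
    intro g
    have h := hder 1 1 g
    simp only [one_mul] at h
    linear_combination -h
  have L1 : ∀ (k : ℕ) (φ : Fin k → A), (∀ i, φ i ∈ E) → ∀ g ∈ E,
      kappa (∏ i, φ i) g = ((k : ℂ) * mu) • ((∏ i, φ i) * g) := by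
    intro k
    induction k with
    | zero => intro φ _ g _; simp [h1]
    | succ n ih =>
      intro φ hφ g hg
      rw [Fin.prod_univ_succ, hder, ih _ (fun i => hφ _) g hg, hκ _ (hφ 0) g hg]
      simp only [Algebra.smul_def]
      push_cast
      ring
  have L2 : ∀ (k : ℕ) (φ : Fin k → A), (∀ i, φ i ∈ E) → ∀ (m : ℕ) (ψ : Fin m → A),
      (∀ i, ψ i ∈ E) →
      kappa (∏ i, φ i) (∏ i, ψ i)
        = ((k : ℂ) * (m : ℂ) * mu) • ((∏ i, φ i) * ∏ i, ψ i) := by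
    intro k φ hφ m
    induction m with
    | zero => intro ψ _; simp [hsymm _ (1 : A), h1]
    | succ n ih =>
      intro ψ hψ
      rw [Fin.prod_univ_succ, hsymm, hder, hsymm _ (∏ i, φ i), hsymm _ (∏ i, φ i),
        ih _ (fun i => hψ _), L1 k φ hφ _ (hψ 0)]
      simp only [Algebra.smul_def]
      push_cast
      ring
  have L3 : ∀ (k : ℕ) (φ : Fin k → A), (∀ i, φ i ∈ E) →
      tau (∏ i, φ i) = ((k : ℂ) * lam + (k : ℂ) * ((k : ℂ) - 1) * mu) • ∏ i, φ i := by
    intro k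
    induction k with
    | zero =>
      intro φ _
      have h := htau 1 1
      simp only [one_mul, h1] at h
      simp only [Fin.prod_univ_zero]
      have : tau (1 : A) = 0 := by linear_combination -h
      simp [this]
    | succ n ih =>
      intro φ hφ
      rw [Fin.prod_univ_succ, htau, ih _ (fun i => hφ _), hτ _ (hφ 0),
        hsymm, L1 n _ (fun i => hφ _) _ (hφ 0)]
      simp only [Algebra.smul_def]
      push_cast
      ring
  intro k _ φ ψ hφ hψ
  refine ⟨L3 k φ hφ, ?_⟩
  rw [L2 k φ hφ k ψ hψ, sq]
end

section
/- Let E = {φ₁,…,φₙ} be an eigenfamily on a semi-Riemannian manifold M (τ(φᵢ) = λφᵢ, κ(φᵢ,φⱼ) = μφᵢφⱼ), and let P, Q : ℂⁿ → ℂ be homogeneous polynomials of the same degree d ≥ 1. Set 𝑃 = P(φ₁,…,φₙ) and 𝑄 = Q(φ₁,…,φₙ). Then τ(𝑃) = (dλ + d(d-1)μ)𝑃, τ(𝑄) = (dλ + d(d-1)μ)𝑄, κ(𝑃,𝑃) = d²μ𝑃², κ(𝑃,𝑄) = d²μ𝑃𝑄, κ(𝑄,𝑄) = d²μ𝑄²,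 and hence 𝑄²κ(𝑃,𝑃) = 𝑃𝑄κ(𝑃,𝑄) = 𝑃²κ(𝑄,𝑄). -/
/-!
By the Leibniz rule for `κ`, a monomial `x₁ ⋯ x_k` satisfies `κ(x₁ ⋯ x_k, y) = k c (x₁ ⋯ x_k) y`
whenever every factor satisfies `κ(xᵢ, y) = c xᵢ y`; applied twice (using symmetry of `κ`), two
degree-`d` monomials in an eigenfamily have `κ = d² μ · product`. The Leibniz rule for `τ` then gives,
by induction on the degree, `τ(φ_{i₁} ⋯ φ_{i_d}) = (dλ + d(d-1)μ) φ_{i₁} ⋯ φ_{i_d}`. Both identities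
are linear in each monomial, so they pass to linear combinations, and the final identities follow by
multiplying out.
-/

open Finset

theorem isLinearMap_of_map_smul_add {R M N : Type*} [Semiring R] [AddCommGroup M] [Module R M]
    [AddCommGroup N] [Module R N] {f : M → N}
    (h : ∀ (c : R) (x y : M), f (c • x + y) = c • f x + f y) : IsLinearMap R f := by
  have hzero : f 0 = 0 := by simpa using h 1 0 0
  exact ⟨fun x y ↦ by simpa using h 1 x y, fun c x ↦ by simpa [hzero] using h c x 0⟩

theorem map_sum_smul_of_map_smul_add {R M N ι : Type*} [Semiring R] [AddCommGroup M]
    [Module R M] [AddCommGroup N] [Module R N] {f : M → N}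
    (h : ∀ (c : R) (x y : M), f (c • x + y) = c • f x + f y)
    (s : Finset ι) (a : ι → R) (m : ι → M) :
    f (∑ i ∈ s, a i • m i) = ∑ i ∈ s, a i • f (m i) := by
  let L := IsLinearMap.mk' f (isLinearMap_of_map_smul_add h)
  exact (map_sum L _ s).trans (sum_congr rfl fun i _ ↦ L.map_smul (a i) (m i))

section Eigenfamily

variable {R A ι : Type*} [CommRing R] [CommRing A] [Algebra R A]

structure IsEigenfamily (tau : A → A) (kappa : A → A → A) (lam mu : R) (φ : ι → A) : Prop where
  tau_eq : ∀ i, tau (φ i) = lam • φ i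
  kappa_eq : ∀ i j, kappa (φ i) (φ j) = mu • (φ i * φ j)

variable {tau : A → A} {kappa : A → A → A}

theorem kappa_one_left (hder : ∀ f g h : A, kappa (f * g) h = f * kappa g h + g * kappa f h)
    (y : A) : kappa 1 y = 0 := by
  simpa using hder 1 1 y

theorem tau_one (htau_prod : ∀ f g : A, tau (f * g) = tau f * g + 2 * kappa f g + f * tau g)
    (hder : ∀ f g h : A, kappa (f * g) h = f * kappa g h + g * kappa f h) : tau 1 = 0 := by
  simpa [kappa_one_left hder] using htau_prod 1 1

theorem kappa_prod_left {κ : Type*} [DecidableEq κ]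
    (hder : ∀ f g h : A, kappa (f * g) h = f * kappa g h + g * kappa f h)
    {s : Finset κ} {x : κ → A} {y : A} {c : R}
    (hx : ∀ i ∈ s, kappa (x i) y = c • (x i * y)) :
    kappa (∏ i ∈ s, x i) y = ((#s : R) * c) • ((∏ i ∈ s, x i) * y) := by
  induction s using Finset.induction_on with
  | empty => simp [kappa_one_left hder]
  | insert k s hk ih =>
    rw [prod_insert hk, hder, ih (fun i hi ↦ hx i (mem_insert_of_mem hi)),
      hx k (mem_insert_self k s), card_insert_of_notMem hk]
    simp only [Algebra.smul_def, map_mul, map_natCast]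
    push_cast
    ring

theorem IsEigenfamily.kappa_prod_prod {κ κ' : Type*} [DecidableEq κ] [DecidableEq κ']
    {lam mu : R} {φ : ι → A} (hE : IsEigenfamily tau kappa lam mu φ)
    (hsymm : ∀ f g : A, kappa f g = kappa g f)
    (hder : ∀ f g h : A, kappa (f * g) h = f * kappa g h + g * kappa f h)
    (s : Finset κ) (t : Finset κ') (f : κ → ι) (g : κ' → ι) :
    kappa (∏ i ∈ s, φ (f i)) (∏ j ∈ t, φ (g j)) =
      ((#s : R) * (#t * mu)) • ((∏ i ∈ s, φ (f i)) * ∏ j ∈ t, φ (g j)) := by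
  refine kappa_prod_left hder fun i _ ↦ ?_
  rw [hsymm, kappa_prod_left hder fun j _ ↦ hE.kappa_eq (g j) (f i), mul_comm (∏ j ∈ t, _)]

theorem IsEigenfamily.tau_prod {κ : Type*} [DecidableEq κ] {lam mu : R} {φ : ι → A}
    (hE : IsEigenfamily tau kappa lam mu φ)
    (hsymm : ∀ f g : A, kappa f g = kappa g f)
    (htau_prod : ∀ f g : A, tau (f * g) = tau f * g + 2 * kappa f g + f * tau g)
    (hder : ∀ f g h : A, kappa (f * g) h = f * kappa g h + g * kappa f h)
    (s : Finset κ) (f : κ → ι) :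
    tau (∏ i ∈ s, φ (f i)) = ((#s : R) * lam + #s * (#s - 1) * mu) • ∏ i ∈ s, φ (f i) := by
  induction s using Finset.induction_on with
  | empty => simp [tau_one htau_prod hder]
  | insert k s hk ih =>
    have hcross : kappa (φ (f k)) (∏ i ∈ s, φ (f i)) =
        ((#s : R) * mu) • (φ (f k) * ∏ i ∈ s, φ (f i)) := by
      rw [hsymm, kappa_prod_left hder fun i _ ↦ hE.kappa_eq (f i) (f k), mul_comm (∏ i ∈ s, _)]
    rw [prod_insert hk, htau_prod, ih, hE.tau_eq, hcross, card_insert_of_notMem hk]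
    simp only [Algebra.smul_def, map_mul, map_add, map_sub, map_one, map_natCast]
    push_cast
    ring

theorem tau_sum_smul_of_eigen {κ : Type*}
    (htau_lin : ∀ (c : R) (f g : A), tau (c • f + g) = c • tau f + tau g)
    {s : Finset κ} (a : κ → R) {m : κ → A} {ν : R} (hm : ∀ i ∈ s, tau (m i) = ν • m i) :
    tau (∑ i ∈ s, a i • m i) = ν • ∑ i ∈ s, a i • m i := by
  rw [map_sum_smul_of_map_smul_add (f := tau) htau_lin s a m, smul_sum]
  exact sum_congr rfl fun i hi ↦ by rw [hm i hi, smul_comm]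

theorem kappa_sum_smul_left {κ : Type*}
    (hkap_lin : ∀ (c : R) (f g h : A), kappa (c • f + g) h = c • kappa f h + kappa g h)
    {s : Finset κ} (a : κ → R) {m : κ → A} {y : A} {c : R}
    (hm : ∀ i ∈ s, kappa (m i) y = c • (m i * y)) :
    kappa (∑ i ∈ s, a i • m i) y = c • ((∑ i ∈ s, a i • m i) * y) := by
  rw [map_sum_smul_of_map_smul_add (f := (kappa · y)) (fun c f g ↦ hkap_lin c f g y), sum_mul,
    smul_sum]
  exact sum_congr rfl fun i hi ↦ by rw [hm i hi, smul_mul_assoc, smul_comm]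

theorem kappa_sum_smul_sum_smul {κ κ' : Type*}
    (hsymm : ∀ f g : A, kappa f g = kappa g f)
    (hkap_lin : ∀ (c : R) (f g h : A), kappa (c • f + g) h = c • kappa f h + kappa g h)
    {s : Finset κ} {t : Finset κ'} (a : κ → R) (b : κ' → R) {m : κ → A} {m' : κ' → A} {c : R}
    (hm : ∀ i ∈ s, ∀ j ∈ t, kappa (m i) (m' j) = c • (m i * m' j)) :
    kappa (∑ i ∈ s, a i • m i) (∑ j ∈ t, b j • m' j) =
      c • ((∑ i ∈ s, a i • m i) * ∑ j ∈ t, b j • m' j) := by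
  refine kappa_sum_smul_left hkap_lin a fun i hi ↦ ?_
  rw [hsymm, kappa_sum_smul_left hkap_lin b fun j hj ↦ by rw [hsymm, hm i hi j hj, mul_comm],
    mul_comm]

end Eigenfamily

theorem stmt18_general {A : Type*} [CommRing A] [Algebra ℂ A]
    (tau : A → A) (kappa : A → A → A)
    (hsymm : ∀ f g : A, kappa f g = kappa g f)
    (htau_prod : ∀ f g : A, tau (f * g) = tau f * g + 2 * kappa f g + f * tau g)
    (hder : ∀ f g h : A, kappa (f * g) h = f * kappa g h + g * kappa f h)
    (htau_lin : ∀ (c : ℂ) (f g : A), tau (c • f + g) = c • tau f + tau g)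
    (hkap_lin : ∀ (c : ℂ) (f g h : A), kappa (c • f + g) h = c • kappa f h + kappa g h)
    (n : ℕ) (φ : Fin n → A) (lam mu : ℂ)
    (hτ : ∀ i, tau (φ i) = lam • φ i)
    (hκ : ∀ i j, kappa (φ i) (φ j) = mu • (φ i * φ j))
    (d : ℕ)
    (a b : (Fin d → Fin n) → ℂ)
    (P Q : A)
    (hP : P = ∑ f : Fin d → Fin n, a f • ∏ j, φ (f j))
    (hQ : Q = ∑ f : Fin d → Fin n, b f • ∏ j, φ (f j)) :
    tau P = ((d : ℂ) * lam + (d : ℂ) * ((d : ℂ) - 1) * mu) • P ∧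
    tau Q = ((d : ℂ) * lam + (d : ℂ) * ((d : ℂ) - 1) * mu) • Q ∧
    kappa P P = ((d : ℂ) ^ 2 * mu) • (P * P) ∧
    kappa P Q = ((d : ℂ) ^ 2 * mu) • (P * Q) ∧
    kappa Q Q = ((d : ℂ) ^ 2 * mu) • (Q * Q) ∧
    Q ^ 2 * kappa P P = P * Q * kappa P Q ∧
    P * Q * kappa P Q = P ^ 2 * kappa Q Q := by
  have hE : IsEigenfamily tau kappa lam mu φ := ⟨hτ, hκ⟩
  have htau : ∀ c : (Fin d → Fin n) → ℂ, tau (∑ f, c f • ∏ j, φ (f j)) =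
      ((d : ℂ) * lam + d * (d - 1) * mu) • ∑ f, c f • ∏ j, φ (f j) := fun c ↦
    tau_sum_smul_of_eigen htau_lin c fun f _ ↦ by
      simpa using hE.tau_prod hsymm htau_prod hder univ f
  have hkappa : ∀ c c' : (Fin d → Fin n) → ℂ,
      kappa (∑ f, c f • ∏ j, φ (f j)) (∑ g, c' g • ∏ j, φ (g j)) =
        ((d : ℂ) ^ 2 * mu) • ((∑ f, c f • ∏ j, φ (f j)) * ∑ g, c' g • ∏ j, φ (g j)) :=
    fun c c' ↦ kappa_sum_smul_sum_smul hsymm hkap_lin c c' fun f _ g _ ↦ by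
      rw [hE.kappa_prod_prod hsymm hder univ univ f g]
      simp [sq, mul_assoc]
  subst hP hQ
  refine ⟨htau a, htau b, hkappa a a, hkappa a b, hkappa b b, ?_, ?_⟩ <;>
    rw [hkappa, hkappa, mul_smul_comm, mul_smul_comm] <;> ring_nf

theorem stmt18 {A : Type*} [CommRing A] [Algebra ℂ A]
    (tau : A → A) (kappa : A → A → A)
    (hsymm : ∀ f g : A, kappa f g = kappa g f)
    (htau_prod : ∀ f g : A, tau (f * g) = tau f * g + 2 * kappa f g + f * tau g)
    (hder : ∀ f g h : A, kappa (f * g) h = f * kappa g h + g * kappa f h)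
    (htau_lin : ∀ (c : ℂ) (f g : A), tau (c • f + g) = c • tau f + tau g)
    (hkap_lin : ∀ (c : ℂ) (f g h : A), kappa (c • f + g) h = c • kappa f h + kappa g h)
    (n : ℕ) (φ : Fin n → A) (lam mu : ℂ)
    (hτ : ∀ i, tau (φ i) = lam • φ i)
    (hκ : ∀ i j, kappa (φ i) (φ j) = mu • (φ i * φ j))
    (d : ℕ) (hd : 1 ≤ d)
    (a b : (Fin d → Fin n) → ℂ)
    (P Q : A)
    (hP : P = ∑ f : Fin d → Fin n, a f • ∏ j, φ (f j))
    (hQ : Q = ∑ f : Fin d → Fin n, b f • ∏ j, φ (f j)) :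
    tau P = ((d : ℂ) * lam + (d : ℂ) * ((d : ℂ) - 1) * mu) • P ∧
    tau Q = ((d : ℂ) * lam + (d : ℂ) * ((d : ℂ) - 1) * mu) • Q ∧
    kappa P P = ((d : ℂ) ^ 2 * mu) • (P * P) ∧
    kappa P Q = ((d : ℂ) ^ 2 * mu) • (P * Q) ∧
    kappa Q Q = ((d : ℂ) ^ 2 * mu) • (Q * Q) ∧
    Q ^ 2 * kappa P P = P * Q * kappa P Q ∧
    P * Q * kappa P Q = P ^ 2 * kappa Q Q :=
  stmt18_general tau kappa hsymm htau_prod hder htau_lin hkap_lin n φ lam mu hτ hκ d a b P Q hP hQ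
end
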